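/- Let F ⊆ ℝ² be a nonempty compact set contained in the open unit disk {(x,y) : x² + y² < 1}. Then the set A = {a ∈ ℝ : 0 < a < 1 and there exists θ ∈ ℝ with F ⊆ H(a,θ)} is nonempty and has a least element; i.e., F can be enclosed by a horocycle and among all enclosing horocycles there is one of minimal size. -/

import Mathlib

/-- Rotation of the plane `ℝ × ℝ` about the origin by angle `θ`. -/
noncomputable def planeRot (θ : ℝ) (p : ℝ × ℝ) : ℝ × ℝ :=
  (p.1 * Real.cos θ - p.2 * Real.sin θ, p.1 * Real.sin θ + p.2 * Real.cos θ)

/-- The horocycle region `H(a,θ)`: the image under the rotation about the origin by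
angle `θ` of the closed elliptical region `{(x,y) : a²x² + (y − (1 − a²))² ≤ a⁴}`. -/
noncomputable def horoRegion (a θ : ℝ) : Set (ℝ × ℝ) :=
  planeRot θ '' {p | a ^ 2 * p.1 ^ 2 + (p.2 - (1 - a ^ 2)) ^ 2 ≤ a ^ 4}

/-!
`H(0,θ)` degenerates to a line tangent to the unit circle, so it misses the open disk, while
`H(a,0)` with `a² = (1 + r)/2` contains the closed disk of radius `r ≤ 1`; taking `r` the largest
radius of a point of `F` gives an enclosing horocycle of size `a₀ < 1`. The pairs `(a,θ)`,
`a ≥ 0`, with `F ⊆ H(a,θ)` form a closed set, `2π`-periodic in `θ`, so its projection to the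
first coordinate attains its infimum (over the compact part `a ≤ a₀`, `θ ∈ [0, 2π]`); the minimum
is positive because `H(0,θ)` cannot contain `F`.
-/

open Real

lemma planeRot_periodic : Function.Periodic planeRot (2 * π) := fun θ => by
  funext p
  simp only [planeRot, cos_add_two_pi, sin_add_two_pi]

lemma planeRot_neg_planeRot (θ : ℝ) (p : ℝ × ℝ) : planeRot (-θ) (planeRot θ p) = p := by
  have hpyth := sin_sq_add_cos_sq θ
  simp only [planeRot, cos_neg, sin_neg, Prod.ext_iff]
  constructor
  · linear_combination p.1 * hpyth
  · linear_combination p.2 * hpyth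

lemma sq_add_sq_planeRot (θ : ℝ) (p : ℝ × ℝ) :
    (planeRot θ p).1 ^ 2 + (planeRot θ p).2 ^ 2 = p.1 ^ 2 + p.2 ^ 2 := by
  simp only [planeRot]
  linear_combination (p.1 ^ 2 + p.2 ^ 2) * sin_sq_add_cos_sq θ

lemma horoRegion_periodic (a : ℝ) : Function.Periodic (horoRegion a) (2 * π) := fun θ => by
  simp only [horoRegion, planeRot_periodic θ]

lemma horoRegion_eq_preimage (a θ : ℝ) :
    horoRegion a θ =
      planeRot (-θ) ⁻¹' {p | a ^ 2 * p.1 ^ 2 + (p.2 - (1 - a ^ 2)) ^ 2 ≤ a ^ 4} :=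
  congrFun (Set.image_eq_preimage_of_inverse (planeRot_neg_planeRot θ)
    fun p => by simpa only [neg_neg] using planeRot_neg_planeRot (-θ) p) _

lemma isClosed_setOf_subset_horoRegion (F : Set (ℝ × ℝ)) :
    IsClosed {x : ℝ × ℝ | F ⊆ horoRegion x.1 x.2} := by
  have hinter : {x : ℝ × ℝ | F ⊆ horoRegion x.1 x.2} = ⋂ p ∈ F, {x : ℝ × ℝ |
      x.1 ^ 2 * (planeRot (-x.2) p).1 ^ 2 + ((planeRot (-x.2) p).2 - (1 - x.1 ^ 2)) ^ 2
        ≤ x.1 ^ 4} := by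
    ext x
    simp [Set.subset_def, horoRegion_eq_preimage]
  rw [hinter]
  refine isClosed_biInter fun p _ => isClosed_le ?_ (by fun_prop)
  simp only [planeRot]
  fun_prop

lemma one_le_of_mem_horoRegion_zero {θ : ℝ} {p : ℝ × ℝ} (hp : p ∈ horoRegion 0 θ) :
    1 ≤ p.1 ^ 2 + p.2 ^ 2 := by
  obtain ⟨q, hq, rfl⟩ := hp
  have hq2 : q.2 = 1 := by
    simp only [Set.mem_ofPred_eq] at hq
    nlinarith [sq_nonneg (q.2 - 1)]
  rw [sq_add_sq_planeRot, hq2]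
  nlinarith [sq_nonneg q.1]

lemma mem_horoRegion_of_sq_add_sq_le {r : ℝ} (hr0 : 0 ≤ r) (hr1 : r ≤ 1) {p : ℝ × ℝ}
    (hp : p.1 ^ 2 + p.2 ^ 2 ≤ r ^ 2) : p ∈ horoRegion √((1 + r) / 2) 0 := by
  refine ⟨p, ?_, by simp [planeRot]⟩
  have ha : √((1 + r) / 2) ^ 2 = (1 + r) / 2 := sq_sqrt (by linarith)
  have hy : -r ≤ p.2 := (abs_le_of_sq_le_sq' (by nlinarith [sq_nonneg p.1]) hr0).1
  simp only [Set.mem_ofPred_eq]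
  -- with `a² ≤ 1` and `-r ≤ y`, the inequality reduces to `x² + y² ≤ r²`
  rw [show √((1 + r) / 2) ^ 4 = (√((1 + r) / 2) ^ 2) ^ 2 by ring, ha]
  nlinarith [sq_nonneg p.1]

lemma exists_isLeast_image_fst_of_isClosed_of_periodic {S : Set (ℝ × ℝ)} (hS : IsClosed S)
    {c : ℝ} (hc : 0 < c) (hper : ∀ a, Function.Periodic (fun θ => (a, θ) ∈ S) c)
    {m : ℝ} (hm : ∀ x ∈ S, m ≤ x.1) {x₀ : ℝ × ℝ} (hx₀ : x₀ ∈ S) :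
    ∃ a, IsLeast (Prod.fst '' S) a := by
  have hreduce : ∀ x ∈ S, ∃ θ ∈ Set.Icc 0 c, (x.1, θ) ∈ S := fun x hx => by
    obtain ⟨θ, hθ, hθx⟩ := (hper x.1).exists_mem_Ico₀ hc x.2
    exact ⟨θ, Set.Ico_subset_Icc_self hθ, hθx ▸ hx⟩
  set K := S ∩ Set.Icc m x₀.1 ×ˢ Set.Icc 0 c
  have hK : IsCompact K := (isCompact_Icc.prod isCompact_Icc).inter_left hS
  have hK_fst : ∀ x ∈ S, x.1 ≤ x₀.1 → x.1 ∈ Prod.fst '' K := fun x hx hle => by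
    obtain ⟨θ, hθ, hθx⟩ := hreduce x hx
    exact ⟨(x.1, θ), ⟨hθx, ⟨hm x hx, hle⟩, hθ⟩, rfl⟩
  obtain ⟨a, ⟨y, hyK, rfl⟩, hleast⟩ :=
    (hK.image continuous_fst).exists_isLeast ⟨_, hK_fst x₀ hx₀ le_rfl⟩
  refine ⟨y.1, ⟨y, hyK.1, rfl⟩, ?_⟩
  rintro _ ⟨x, hx, rfl⟩
  rcases le_or_gt x.1 x₀.1 with hle | hlt
  · exact hleast (hK_fst x hx hle)
  · exact hyK.2.1.2.trans hlt.le

/-- Any nonempty compact subset of the open unit disk (the Cayley–Klein model of the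
hyperbolic plane) can be enclosed by a horocycle, and among all enclosing horocycles
there is one of minimal size. -/
theorem minimal_enclosing_horocycle_exists
    (F : Set (ℝ × ℝ)) (hne : F.Nonempty) (hF : IsCompact F)
    (hdisk : F ⊆ {p : ℝ × ℝ | p.1 ^ 2 + p.2 ^ 2 < 1}) :
    ({a : ℝ | 0 < a ∧ a < 1 ∧ ∃ θ : ℝ, F ⊆ horoRegion a θ}).Nonempty ∧
      ∃ a : ℝ, IsLeast {a : ℝ | 0 < a ∧ a < 1 ∧ ∃ θ : ℝ, F ⊆ horoRegion a θ} a := by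
  obtain ⟨p₀, hp₀F, hmax⟩ := hF.exists_isMaxOn hne
    (by fun_prop : Continuous fun p : ℝ × ℝ => p.1 ^ 2 + p.2 ^ 2).continuousOn
  set r := √(p₀.1 ^ 2 + p₀.2 ^ 2)
  have hr : r < 1 := (sqrt_lt' one_pos).mpr (by rw [one_pow]; exact hdisk hp₀F)
  have hr2 : r ^ 2 = p₀.1 ^ 2 + p₀.2 ^ 2 := sq_sqrt (by positivity)
  set a₀ := √((1 + r) / 2)
  have ha₀ : 0 < a₀ ∧ a₀ < 1 :=
    ⟨sqrt_pos.mpr (by positivity), (sqrt_lt' one_pos).mpr (by linarith)⟩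
  have hcover : F ⊆ horoRegion a₀ 0 := fun p hp =>
    mem_horoRegion_of_sq_add_sq_le (sqrt_nonneg _) hr.le
      (by rw [hr2]; exact hmax hp)
  set S := {x : ℝ × ℝ | 0 ≤ x.1 ∧ F ⊆ horoRegion x.1 x.2}
  have hS : IsClosed S :=
    (isClosed_le continuous_const continuous_fst).inter (isClosed_setOf_subset_horoRegion F)
  obtain ⟨_, ⟨x, ⟨hx0, hxF⟩, rfl⟩, hleast⟩ := exists_isLeast_image_fst_of_isClosed_of_periodic
    hS two_pi_pos (fun a θ => by simp only [S, Set.mem_ofPred_eq, horoRegion_periodic a θ])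
    (fun x hx => hx.1) (show (a₀, 0) ∈ S from ⟨ha₀.1.le, hcover⟩)
  have hx_pos : 0 < x.1 := by
    refine hx0.lt_of_ne fun h => ?_
    obtain ⟨p, hp⟩ := hne
    exact (one_le_of_mem_horoRegion_zero (h ▸ hxF hp)).not_gt (hdisk hp)
  have hx_lt : x.1 < 1 := (hleast ⟨(a₀, 0), ⟨ha₀.1.le, hcover⟩, rfl⟩).trans_lt ha₀.2
  refine ⟨⟨a₀, ha₀.1, ha₀.2, 0, hcover⟩, x.1, ⟨hx_pos, hx_lt, x.2, hxF⟩, ?_⟩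
  rintro b ⟨hb0, -, θ, hb⟩
  exact hleast ⟨(b, θ), ⟨hb0.le, hb⟩, rfl⟩
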